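/- If g ∈ C³([0,∞)) satisfies condition (g) and g(0) ≥ log 2, then the function g̃ = exp∘g (that is, g̃(u) = e^{g(u)}) also satisfies condition (g), and g̃(0) ≥ 2 ≥ log 2. Consequently, by induction, if φ satisfies condition (g) with φ(0) ≥ log 2 and g₁ = φ, gₙ = exp∘g_{n−1} for n ≥ 2, then every gₙ satisfies condition (g). -/

import Mathlib

/-!
Write `G = exp ∘ g`. Differentiating,
`G' = G g'`, `G'' = G (g'² + g'')`, `G''' = G (g'³ + 3 g' g'' + g''')`, hence
`G'² - G'' = G ((G - 2) g'² + (g'² - g''))` and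
`2 G''² - G' G''' = G² (g'⁴ + g'² g'' + (2 g''² - g' g'''))`.
The second expression is positive by condition (g) for `g`; the first is nonnegative once
`G ≥ 2`, which holds on `[0, ∞)` because `g` is increasing and `g(0) ≥ log 2`.
Since then `G(0) ≥ 2 ≥ log 2`, the argument iterates.
-/

noncomputable def dIci (g : ℝ → ℝ) : ℝ → ℝ := derivWithin g (Set.Ici 0)

/-- Condition (g): `g ∈ C³([0,∞))` with `g' > 0`, `g'' > 0`, `g'² - g'' ≥ 0`
and `2 g''² - g' g''' > 0` on `[0, ∞)`. -/
def ConditionG (g : ℝ → ℝ) : Prop :=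
  ContDiffOn ℝ 3 g (Set.Ici 0) ∧
  ∀ u : ℝ, 0 ≤ u →
    0 < dIci g u ∧
    0 < dIci (dIci g) u ∧
    0 ≤ (dIci g u) ^ 2 - dIci (dIci g) u ∧
    0 < 2 * (dIci (dIci g) u) ^ 2 - dIci g u * dIci (dIci (dIci g)) u

/-- The iterates `g₁ = φ`, `gₙ = exp ∘ g_{n-1}`; here `gseq φ n = g_{n+1}`. -/
noncomputable def gseq (φ : ℝ → ℝ) : ℕ → (ℝ → ℝ)
  | 0 => φ
  | n + 1 => fun u => Real.exp (gseq φ n u)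

open Set Real

section dIci

variable {f f₁ f₂ f' : ℝ → ℝ}

lemma ContDiffOn.dIci {n : WithTop ℕ∞} (hf : ContDiffOn ℝ (n + 1) f (Ici 0)) :
    ContDiffOn ℝ n (dIci f) (Ici 0) :=
  hf.derivWithin (uniqueDiffOn_Ici 0) le_rfl

lemma DifferentiableOn.hasDerivWithinAt_dIci (hf : DifferentiableOn ℝ f (Ici 0)) :
    ∀ u ∈ Ici (0 : ℝ), HasDerivWithinAt f (dIci f u) (Ici 0) u :=
  fun u hu => (hf u hu).hasDerivWithinAt

lemma eqOn_dIci_of_hasDerivWithinAt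
    (h : ∀ u ∈ Ici (0 : ℝ), HasDerivWithinAt f (f' u) (Ici 0) u) :
    EqOn (dIci f) f' (Ici 0) :=
  fun u hu => (h u hu).derivWithin (uniqueDiffOn_Ici 0 u hu)

lemma dIci_congr (h : EqOn f₁ f₂ (Ici 0)) : EqOn (dIci f₁) (dIci f₂) (Ici 0) :=
  fun _ hu => derivWithin_congr h (h hu)

end dIci

lemma log_two_le_two : log 2 ≤ 2 := by
  linarith [log_two_lt_d9]

lemma sq_sub_nonneg_of_exp_comp {E a b : ℝ} (hE : 2 ≤ E) (hab : 0 ≤ a ^ 2 - b) :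
    0 ≤ (E * a) ^ 2 - E * (a ^ 2 + b) := by
  have key : (E * a) ^ 2 - E * (a ^ 2 + b) = E * ((E - 2) * a ^ 2 + (a ^ 2 - b)) := by ring
  have : 0 ≤ E - 2 := by linarith
  rw [key]
  positivity

lemma third_order_pos_of_exp_comp {E a b c : ℝ} (hE : 0 < E) (hb : 0 ≤ b)
    (habc : 0 < 2 * b ^ 2 - a * c) :
    0 < 2 * (E * (a ^ 2 + b)) ^ 2 - E * a * (E * (a ^ 3 + 3 * a * b + c)) := by
  have key : 2 * (E * (a ^ 2 + b)) ^ 2 - E * a * (E * (a ^ 3 + 3 * a * b + c))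
      = E ^ 2 * (a ^ 4 + a ^ 2 * b + (2 * b ^ 2 - a * c)) := by ring
  rw [key]
  positivity

section expComp

variable {g : ℝ → ℝ}

lemma dIci_exp_comp (hg : DifferentiableOn ℝ g (Ici 0)) :
    EqOn (dIci fun u => exp (g u)) (fun u => exp (g u) * dIci g u) (Ici 0) :=
  eqOn_dIci_of_hasDerivWithinAt fun u hu => (hg.hasDerivWithinAt_dIci u hu).exp

lemma dIci_dIci_exp_comp (hg : ContDiffOn ℝ 2 g (Ici 0)) :
    EqOn (dIci (dIci fun u => exp (g u)))
      (fun u => exp (g u) * (dIci g u ^ 2 + dIci (dIci g) u)) (Ici 0) := by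
  have H₀ := (hg.differentiableOn two_ne_zero).hasDerivWithinAt_dIci
  have H₁ := (hg.dIci.differentiableOn one_ne_zero).hasDerivWithinAt_dIci
  refine (dIci_congr (dIci_exp_comp (hg.differentiableOn two_ne_zero))).trans <|
    eqOn_dIci_of_hasDerivWithinAt fun u hu => ?_
  exact ((H₀ u hu).exp.mul (H₁ u hu)).congr_deriv (by ring)

lemma dIci_dIci_dIci_exp_comp (hg : ContDiffOn ℝ 3 g (Ici 0)) :
    EqOn (dIci (dIci (dIci fun u => exp (g u))))
      (fun u => exp (g u) * (dIci g u ^ 3 + 3 * dIci g u * dIci (dIci g) u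
        + dIci (dIci (dIci g)) u)) (Ici 0) := by
  have hg₁ : ContDiffOn ℝ 2 (dIci g) (Ici 0) := hg.dIci
  have H₀ := (hg.differentiableOn three_ne_zero).hasDerivWithinAt_dIci
  have H₁ := (hg₁.differentiableOn two_ne_zero).hasDerivWithinAt_dIci
  have H₂ := (hg₁.dIci.differentiableOn one_ne_zero).hasDerivWithinAt_dIci
  refine (dIci_congr (dIci_dIci_exp_comp (hg.of_le (by norm_num)))).trans <|
    eqOn_dIci_of_hasDerivWithinAt fun u hu => ?_
  exact ((H₀ u hu).exp.mul (((H₁ u hu).pow 2).add (H₂ u hu))).congr_deriv <| by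
    simp only [Pi.add_apply, Pi.pow_apply]; push_cast; ring

lemma ConditionG.monotoneOn (hg : ConditionG g) : MonotoneOn g (Ici 0) := by
  refine monotoneOn_of_hasDerivWithinAt_nonneg (convex_Ici 0)
    hg.1.continuousOn (f' := dIci g) (fun u hu => ?_) (fun u hu => ?_) <;>
    rw [interior_Ici] at hu
  · exact ((hg.1.differentiableOn three_ne_zero).hasDerivWithinAt_dIci u
      (Ioi_subset_Ici_self hu)).mono interior_subset
  · exact (hg.2 u hu.le).1.le

lemma ConditionG.two_le_exp (hg : ConditionG g) (hg0 : log 2 ≤ g 0) {u : ℝ} (hu : 0 ≤ u) :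
    2 ≤ exp (g u) :=
  (log_le_iff_le_exp two_pos).1 (hg0.trans (hg.monotoneOn self_mem_Ici hu hu))

lemma ConditionG.exp_comp (hg : ConditionG g) (hg0 : log 2 ≤ g 0) :
    ConditionG fun u => exp (g u) := by
  refine ⟨contDiff_exp.comp_contDiffOn hg.1, fun u hu => ?_⟩
  obtain ⟨h₁, h₂, h₃, h₄⟩ := hg.2 u hu
  rw [dIci_exp_comp (hg.1.differentiableOn three_ne_zero) hu,
    dIci_dIci_exp_comp (hg.1.of_le (by norm_num)) hu, dIci_dIci_dIci_exp_comp hg.1 hu]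
  exact ⟨by positivity, by positivity, sq_sub_nonneg_of_exp_comp (hg.two_le_exp hg0 hu) h₃,
    third_order_pos_of_exp_comp (exp_pos _) h₂.le h₄⟩

end expComp

lemma conditionG_gseq {φ : ℝ → ℝ} (hφ : ConditionG φ) (hφ0 : log 2 ≤ φ 0) (n : ℕ) :
    ConditionG (gseq φ n) ∧ log 2 ≤ gseq φ n 0 := by
  induction n with
  | zero => exact ⟨hφ, hφ0⟩
  | succ n ih =>
    exact ⟨ih.1.exp_comp ih.2, log_two_le_two.trans (ih.1.two_le_exp ih.2 le_rfl)⟩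

/-- If `g` satisfies condition (g) and `g(0) ≥ log 2`, then `exp ∘ g` also
satisfies condition (g) and `(exp ∘ g)(0) ≥ 2 ≥ log 2`; consequently, by
induction, all iterates `gₙ` (with `g₁ = φ`, `gₙ = exp ∘ g_{n-1}`) of any `φ`
satisfying condition (g) with `φ(0) ≥ log 2` satisfy condition (g). -/
theorem exp_comp_preserves_conditionG
    (g : ℝ → ℝ) (hg : ConditionG g) (hg0 : Real.log 2 ≤ g 0) :
    (ConditionG (fun u => Real.exp (g u)) ∧
      2 ≤ Real.exp (g 0) ∧ Real.log 2 ≤ 2) ∧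
    (∀ φ : ℝ → ℝ, ConditionG φ → Real.log 2 ≤ φ 0 →
      ∀ n : ℕ, ConditionG (gseq φ n)) :=
  ⟨⟨hg.exp_comp hg0, hg.two_le_exp hg0 le_rfl, log_two_le_two⟩,
    fun _ hφ hφ0 n => (conditionG_gseq hφ hφ0 n).1⟩
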